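/- Let T be a bounded linear operator on a complex Banach space X, and suppose that for every nonempty relatively open subset U of the spectrum σ(T), the glocal spectral subspace 𝒳_T(closure(U)) is dense in X. Then the adjoint operator T* on X* has Dunford's property (C). -/

import Mathlib

/-!
An eigenvector `ψ` of `T*` for the eigenvalue `μ` kills every `x = (T - μ) f(μ)` of `𝒳_T(G)` with
`μ ∉ G`. Every `λ ∈ σ(T)` has arbitrarily small compact neighbourhoods `G` with `𝒳_T(G)` dense, so
`T*` has at most one eigenvalue and therefore the SVEP.

Let `F` be closed. If `σ(T) ⊆ F`, then `X*_{T*}(F)` is everything, since `σ_{T*}(φ) ⊆ σ(T*) ⊆ σ(T)`.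
Otherwise pick `λ ∈ σ(T) \ F` and a compact `G` disjoint from `F` with `𝒳_T(G)` dense. For `φ` with
`σ_{T*}(φ) ⊆ F` and `x = (T - z) f(z)` in `𝒳_T(G)`, the SVEP provides a local resolvent `g` of `φ` on
`Fᶜ`; the functions `φ ∘ f` on `Gᶜ` and `z ↦ g(z) x` on `Fᶜ` glue to an entire function vanishing at
infinity, so `φ ∘ f = 0` by Liouville, and `φ x = φ (T f(z)) → 0` as `z → ∞`. Hence
`X*_{T*}(F) = {0}`.
-/

open Set Filter Topology Bornology Complex

noncomputable section




variable {X : Type*} [NormedAddCommGroup X] [NormedSpace ℂ X]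

/-- The glocal spectral subspace `𝒳_T(F)` of a bounded operator `T`. -/
def glocalSubspace (T : X →L[ℂ] X) (F : Set ℂ) : Set X :=
  {x | ∃ f : ℂ → X, AnalyticOnNhd ℂ f Fᶜ ∧ ∀ z ∈ Fᶜ, T (f z) - z • f z = x}

/-- The local resolvent set `ρ_T(x)`. -/
def localResolventSet (T : X →L[ℂ] X) (x : X) : Set ℂ :=
  ⋃₀ {U : Set ℂ | IsOpen U ∧ ∃ f : ℂ → X, AnalyticOnNhd ℂ f U ∧ ∀ z ∈ U, T (f z) - z • f z = x}

/-- The local spectrum `σ_T(x)`. -/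
def localSpectrum (T : X →L[ℂ] X) (x : X) : Set ℂ := (localResolventSet T x)ᶜ

/-- The local spectral subspace `X_T(F)`. -/
def localSubspace (T : X →L[ℂ] X) (F : Set ℂ) : Set X := {x | localSpectrum T x ⊆ F}

/-- Dunford's property (C). -/
def HasPropertyC (T : X →L[ℂ] X) : Prop :=
  ∀ F : Set ℂ, IsClosed F → IsClosed (localSubspace T F)

/-- The single-valued extension property. -/
def HasSVEP (T : X →L[ℂ] X) : Prop :=
  ∀ U : Set ℂ, IsOpen U → ∀ f : ℂ → X, AnalyticOnNhd ℂ f U →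
    (∀ z ∈ U, T (f z) - z • f z = 0) → ∀ z ∈ U, f z = 0

/-- The point spectrum of an operator. -/
def pointSpectrum (T : X →L[ℂ] X) : Set ℂ := {μ : ℂ | ∃ x : X, x ≠ 0 ∧ T x = μ • x}

/-- The local spectral radius `r_T(x) = limsup_n ‖Tⁿx‖^(1/n)`. -/
def localSpectralRadius (T : X →L[ℂ] X) (x : X) : ℝ :=
  Filter.limsup (fun n : ℕ => ‖(T ^ n) x‖ ^ (1 / (n : ℝ))) Filter.atTop

/-- The adjoint operator `T*` acting on the dual space `X*`. -/
def dualOp (T : X →L[ℂ] X) : StrongDual ℂ X →L[ℂ] StrongDual ℂ X :=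
  (ContinuousLinearMap.compL ℂ X X ℂ).flip T

/-- Restriction of an operator to an invariant subspace. -/
def restrictOp (T : X →L[ℂ] X) (M : Submodule ℂ X) (h : ∀ x ∈ M, T x ∈ M) : M →L[ℂ] M :=
  (T.comp M.subtypeL).codRestrict M (fun x => h x.1 x.2)

/-- The full spectrum `η(K)`: the union of `K` with all the bounded connected
components of its complement. -/
def fullSpectrum (K : Set ℂ) : Set ℂ :=
  K ∪ {z : ℂ | z ∉ K ∧ Bornology.IsBounded (connectedComponentIn Kᶜ z)}

/-- `U` is a nonempty relatively open subset of `σ(T)`. -/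
def RelativelyOpenInSpectrum (T : X →L[ℂ] X) (U : Set ℂ) : Prop :=
  U.Nonempty ∧ ∃ V : Set ℂ, IsOpen V ∧ U = spectrum ℂ T ∩ V

lemma eq_neg_resolvent_apply_of_sub_smul_eq {S : X →L[ℂ] X} {z : ℂ} (hz : z ∈ resolventSet ℂ S)
    {v y : X} (h : S v - z • v = y) : v = -resolvent S z y := by
  have hv : (algebraMap ℂ (X →L[ℂ] X) z - S) v = -y := by
    rw [← h, Algebra.algebraMap_eq_smul_one]
    simp only [sub_apply, smul_apply, one_apply_eq_self, neg_sub]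
  rw [resolvent, ← map_neg, ← hv, ← mul_apply_eq_comp, Ring.inverse_mul_cancel _ hz,
    one_apply_eq_self]

lemma pointSpectrum_subset_spectrum (S : X →L[ℂ] X) : pointSpectrum S ⊆ spectrum ℂ S := by
  rintro μ ⟨y, hy, hSy⟩
  by_contra hμ
  have := eq_neg_resolvent_apply_of_sub_smul_eq (spectrum.notMem_iff.mp hμ) (sub_eq_zero.mpr hSy)
  exact hy (by simpa using this)

lemma localSpectrum_subset_spectrum [CompleteSpace X] (S : X →L[ℂ] X) (y : X) :
    localSpectrum S y ⊆ spectrum ℂ S := by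
  refine compl_subset_compl.mpr fun z hz => ⟨resolventSet ℂ S, ⟨spectrum.isOpen_resolventSet S,
    fun w => -resolvent S w y, ?_, fun w hw => ?_⟩, hz⟩
  · refine DifferentiableOn.analyticOnNhd (fun w hw => ?_) (spectrum.isOpen_resolventSet S)
    exact ((spectrum.hasDerivAt_resolvent_const_left hw).differentiableAt.clm_apply
      (differentiableAt_const y)).neg.differentiableWithinAt
  · have hy := congr($(Ring.mul_inverse_cancel _ hw) y)
    simp only [Algebra.algebraMap_eq_smul_one, mul_apply_eq_comp, sub_apply, smul_apply,
      one_apply_eq_self] at hy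
    simp only [resolvent, Algebra.algebraMap_eq_smul_one, map_neg, smul_neg]
    linear_combination (norm := module) hy

lemma localSpectrum_zero (S : X →L[ℂ] X) : localSpectrum S 0 = ∅ := by
  refine compl_eq_bot.mpr (eq_univ_of_forall fun z => ⟨univ, ⟨isOpen_univ, 0,
    analyticOnNhd_const, fun w _ => ?_⟩, mem_univ z⟩)
  simp

lemma hasSVEP_of_interior_pointSpectrum_eq_empty {S : X →L[ℂ] X}
    (h : interior (pointSpectrum S) = ∅) : HasSVEP S := by
  intro U hU f hf hfS z hz
  by_contra hfz
  have hpoint : ∀ᶠ w in 𝓝 z, w ∈ pointSpectrum S := by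
    filter_upwards [(hf z hz).continuousAt.eventually_ne hfz, hU.mem_nhds hz] with w hw hwU
    exact ⟨f w, hw, sub_eq_zero.mp (hfS w hwU)⟩
  simpa [h] using mem_interior_iff_mem_nhds.mpr hpoint

lemma HasSVEP.eqOn_of_sub_smul_eq {S : X →L[ℂ] X} (hS : HasSVEP S) {y : X} {U V : Set ℂ}
    (hU : IsOpen U) (hV : IsOpen V) {f g : ℂ → X} (hf : AnalyticOnNhd ℂ f U)
    (hg : AnalyticOnNhd ℂ g V) (hfy : ∀ z ∈ U, S (f z) - z • f z = y)
    (hgy : ∀ z ∈ V, S (g z) - z • g z = y) : EqOn f g (U ∩ V) := by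
  intro z hz
  refine sub_eq_zero.mp (hS _ (hU.inter hV) (f - g) ((hf.mono inter_subset_left).sub
    (hg.mono inter_subset_right)) (fun w hw => ?_) z hz)
  simp only [Pi.sub_apply, map_sub, smul_sub]
  linear_combination (norm := module) hfy w hw.1 - hgy w hw.2

lemma HasSVEP.exists_analyticOnNhd_localResolventSet {S : X →L[ℂ] X} (hS : HasSVEP S) (y : X) :
    ∃ g : ℂ → X, AnalyticOnNhd ℂ g (localResolventSet S y) ∧
      ∀ z ∈ localResolventSet S y, S (g z) - z • g z = y := by
  have hlocal : ∀ z ∈ localResolventSet S y, ∃ U : Set ℂ, IsOpen U ∧ z ∈ U ∧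
      U ⊆ localResolventSet S y ∧ ∃ f : ℂ → X, AnalyticOnNhd ℂ f U ∧
        ∀ w ∈ U, S (f w) - w • f w = y := by
    rintro z ⟨U, hUmem, hzU⟩
    exact ⟨U, hUmem.1, hzU, subset_sUnion_of_mem hUmem, hUmem.2⟩
  choose! U hU hzU hUρ f hf hfy using hlocal
  have hglue : ∀ z ∈ localResolventSet S y, EqOn (fun w => f w w) (f z) (U z) := fun z hz w hw =>
    hS.eqOn_of_sub_smul_eq (hU w (hUρ z hz hw)) (hU z hz) (hf w (hUρ z hz hw)) (hf z hz)
      (hfy w (hUρ z hz hw)) (hfy z hz) ⟨hzU w (hUρ z hz hw), hw⟩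
  refine ⟨fun w => f w w, fun z hz => ?_, fun z hz => hfy z hz z (hzU z hz)⟩
  exact (hf z hz z (hzU z hz)).congr
    (Filter.eventuallyEq_of_mem ((hU z hz).mem_nhds (hzU z hz)) (hglue z hz)).symm

lemma tendsto_cobounded_of_sub_smul_eq [CompleteSpace X] {S : X →L[ℂ] X} {G : Set ℂ}
    (hG : IsBounded G) {f : ℂ → X} {y : X} (hfy : ∀ z ∈ Gᶜ, S (f z) - z • f z = y) :
    Tendsto f (cobounded ℂ) (𝓝 0) := by
  have hR : Tendsto (fun z => -resolvent S z y) (cobounded ℂ) (𝓝 0) := by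
    simpa using (((ContinuousLinearMap.apply ℂ X y).continuous.tendsto 0).comp
      (spectrum.resolvent_tendsto_cobounded (𝕜 := ℂ) S)).neg
  refine hR.congr' ?_
  filter_upwards [isBounded_def.mp hG, isBounded_def.mp (spectrum.isCompact S).isBounded]
    with z hzG hzρ
  exact (eq_neg_resolvent_apply_of_sub_smul_eq (spectrum.notMem_iff.mp hzρ) (hfy z hzG)).symm

lemma exists_isCompact_subset_dense_glocalSubspace {T : X →L[ℂ] X}
    (hdense : ∀ U : Set ℂ, RelativelyOpenInSpectrum T U → Dense (glocalSubspace T (closure U)))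
    {lam : ℂ} (hlam : lam ∈ spectrum ℂ T) {s : Set ℂ} (hs : s ∈ 𝓝 lam) :
    ∃ G ⊆ s, IsCompact G ∧ Dense (glocalSubspace T G) := by
  obtain ⟨ε, hε, hεs⟩ := Metric.nhds_basis_closedBall.mem_iff.mp hs
  have hG : closure (spectrum ℂ T ∩ Metric.ball lam ε) ⊆ Metric.closedBall lam ε :=
    (closure_mono inter_subset_right).trans Metric.closure_ball_subset_closedBall
  exact ⟨_, hG.trans hεs, (isCompact_closedBall lam ε).of_isClosed_subset isClosed_closure hG,
    hdense _ ⟨⟨lam, hlam, Metric.mem_ball_self hε⟩, _, Metric.isOpen_ball, rfl⟩⟩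

lemma Differentiable.piecewise_of_eqOn {𝕜 E : Type*} [NontriviallyNormedField 𝕜]
    [NormedAddCommGroup E] [NormedSpace 𝕜 E] {s t : Set 𝕜} [∀ z, Decidable (z ∈ s)]
    {f g : 𝕜 → E} (hs : IsClosed s) (ht : IsClosed t) (hst : Disjoint s t)
    (hf : DifferentiableOn 𝕜 f tᶜ) (hg : DifferentiableOn 𝕜 g sᶜ) (hfg : EqOn f g (tᶜ ∩ sᶜ)) :
    Differentiable 𝕜 (s.piecewise f g) := by
  have hpf : EqOn (s.piecewise f g) f tᶜ := fun z hz => by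
    by_cases hzs : z ∈ s
    · exact piecewise_eq_of_mem s f g hzs
    · rw [piecewise_eq_of_notMem s f g hzs, hfg ⟨hz, hzs⟩]
  intro z
  by_cases hzs : z ∈ s
  · have hzt : z ∈ tᶜ := fun hzt => hst.notMem_of_mem_left hzs hzt
    exact (hf.differentiableAt (ht.isOpen_compl.mem_nhds hzt)).congr_of_eventuallyEq
      (Filter.eventuallyEq_of_mem (ht.isOpen_compl.mem_nhds hzt) hpf)
  · exact (hg.differentiableAt (hs.isOpen_compl.mem_nhds hzs)).congr_of_eventuallyEq
      (Filter.eventuallyEq_of_mem (hs.isOpen_compl.mem_nhds hzs) (piecewise_eqOn_compl s f g))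

lemma StrongDual.eq_zero_of_dense {φ : StrongDual ℂ X} {s : Set X} (hs : Dense s) (h : ∀ x ∈ s, φ x = 0) : φ = 0 :=
  DFunLike.coe_injective (φ.continuous.ext_on hs continuous_zero h)

section Adjoint

set_option synthInstance.maxHeartbeats 100000

@[simp]
lemma dualOp_apply (T : X →L[ℂ] X) (φ : StrongDual ℂ X) (x : X) : dualOp T φ x = φ (T x) := rfl

lemma dualOp_mul (A B : X →L[ℂ] X) : dualOp (A * B) = dualOp B * dualOp A := rfl

lemma dualOp_one : dualOp (1 : X →L[ℂ] X) = 1 := rfl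

lemma dualOp_smul_one_sub (T : X →L[ℂ] X) (z : ℂ) : dualOp (z • 1 - T) = z • 1 - dualOp T := by
  ext φ x
  simp

lemma spectrum_dualOp_subset (T : X →L[ℂ] X) : spectrum ℂ (dualOp T) ⊆ spectrum ℂ T := by
  refine compl_subset_compl.mpr fun z hz => ?_
  obtain ⟨R, hR₁, hR₂⟩ := isUnit_iff_exists.mp (show IsUnit (algebraMap ℂ _ z - T) from hz)
  rw [Algebra.algebraMap_eq_smul_one] at hR₁ hR₂
  show IsUnit (algebraMap ℂ _ z - dualOp T)
  rw [Algebra.algebraMap_eq_smul_one, ← dualOp_smul_one_sub]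
  exact isUnit_iff_exists.mpr ⟨dualOp R, by rw [← dualOp_mul, hR₂, dualOp_one],
    by rw [← dualOp_mul, hR₁, dualOp_one]⟩

lemma apply_eq_zero_of_dualOp_eq_smul_of_mem_glocalSubspace {T : X →L[ℂ] X} {ψ : StrongDual ℂ X}
    {μ : ℂ} (hψ : dualOp T ψ = μ • ψ) {G : Set ℂ} (hμ : μ ∉ G) {x : X}
    (hx : x ∈ glocalSubspace T G) : ψ x = 0 := by
  obtain ⟨f, -, hf⟩ := hx
  have hψf : ψ (T (f μ)) = μ * ψ (f μ) := by simpa using congr($hψ (f μ))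
  rw [← hf μ hμ, map_sub, map_smul, hψf, smul_eq_mul, sub_self]

lemma pointSpectrum_dualOp_subsingleton {T : X →L[ℂ] X}
    (hdense : ∀ U : Set ℂ, RelativelyOpenInSpectrum T U → Dense (glocalSubspace T (closure U))) :
    (pointSpectrum (dualOp T)).Subsingleton := by
  rintro μ hμ ν ⟨ψ, hψ, hψν⟩
  by_contra hne
  have hμT : μ ∈ spectrum ℂ T := spectrum_dualOp_subset T (pointSpectrum_subset_spectrum _ hμ)
  obtain ⟨G, hGν, -, hGd⟩ :=
    exists_isCompact_subset_dense_glocalSubspace hdense hμT (isOpen_compl_singleton.mem_nhds hne)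
  exact hψ (StrongDual.eq_zero_of_dense hGd fun x hx =>
    apply_eq_zero_of_dualOp_eq_smul_of_mem_glocalSubspace hψν (fun hνG => hGν hνG rfl) hx)

lemma hasSVEP_dualOp {T : X →L[ℂ] X}
    (hdense : ∀ U : Set ℂ, RelativelyOpenInSpectrum T U → Dense (glocalSubspace T (closure U))) :
    HasSVEP (dualOp T) := by
  refine hasSVEP_of_interior_pointSpectrum_eq_empty ?_
  rcases (pointSpectrum_dualOp_subsingleton hdense).eq_empty_or_singleton with h | ⟨μ, h⟩
  · rw [h, interior_empty]
  · rw [h, interior_singleton]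

lemma apply_eq_zero_of_mem_localSubspace_dualOp_of_sub_smul_eq [CompleteSpace X] {T : X →L[ℂ] X}
    (hT : HasSVEP (dualOp T)) {F G : Set ℂ} (hF : IsClosed F) (hG : IsCompact G)
    (hGF : Disjoint G F) {φ : StrongDual ℂ X} (hφ : φ ∈ localSubspace (dualOp T) F)
    {f : ℂ → X} {x : X} (hf : AnalyticOnNhd ℂ f Gᶜ) (hfx : ∀ z ∈ Gᶜ, T (f z) - z • f z = x) :
    ∀ z ∉ G, φ (f z) = 0 := by
  classical
  obtain ⟨g, hg, hgφ⟩ := hT.exists_analyticOnNhd_localResolventSet φ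
  have hFρ : Fᶜ ⊆ localResolventSet (dualOp T) φ := compl_subset_comm.mp hφ
  have hagree : EqOn (fun z => φ (f z)) (fun z => g z x) (Gᶜ ∩ Fᶜ) := by
    rintro z ⟨hzG, hzF⟩
    have hgz := congr($(hgφ z (hFρ hzF)) (f z))
    simp only [sub_apply, smul_apply, dualOp_apply, smul_eq_mul] at hgz
    show φ (f z) = g z x
    rw [← hgz, ← hfx z hzG, map_sub, map_smul, smul_eq_mul]
  -- glue `φ ∘ f` and `(· x) ∘ g` into an entire function, which vanishes by Liouville
  set h : ℂ → ℂ := F.piecewise (fun z => φ (f z)) (fun z => g z x)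
  have hh : Differentiable ℂ h :=
    Differentiable.piecewise_of_eqOn hF hG.isClosed hGF.symm
      (φ.differentiable.comp_differentiableOn hf.differentiableOn)
      ((hg.differentiableOn.mono hFρ).clm_apply (differentiableOn_const x)) hagree
  have hhG : EqOn h (fun z => φ (f z)) Gᶜ := fun z hzG => by
    by_cases hzF : z ∈ F
    · exact piecewise_eq_of_mem F _ _ hzF
    · exact (piecewise_eq_of_notMem F _ _ hzF).trans (hagree ⟨hzG, hzF⟩).symm
  have hφf : Tendsto (fun z => φ (f z)) (cobounded ℂ) (𝓝 0) :=
    (φ.continuous.tendsto' 0 0 (map_zero φ)).comp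
      (tendsto_cobounded_of_sub_smul_eq hG.isBounded hfx)
  have hlim : Tendsto h (cobounded ℂ) (𝓝 0) := by
    refine hφf.congr' ?_
    filter_upwards [isBounded_def.mp hG.isBounded] with z hz
    exact (hhG hz).symm
  intro z hz
  exact (hhG hz).symm.trans
    (hh.apply_eq_of_tendsto_cocompact z (Metric.cobounded_eq_cocompact (α := ℂ) ▸ hlim))

lemma apply_eq_zero_of_mem_localSubspace_of_mem_glocalSubspace [CompleteSpace X] {T : X →L[ℂ] X}
    (hT : HasSVEP (dualOp T)) {F G : Set ℂ} (hF : IsClosed F) (hG : IsCompact G)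
    (hGF : Disjoint G F) {φ : StrongDual ℂ X} (hφ : φ ∈ localSubspace (dualOp T) F) {x : X}
    (hx : x ∈ glocalSubspace T G) : φ x = 0 := by
  obtain ⟨f, hf, hfx⟩ := hx
  have hφf := apply_eq_zero_of_mem_localSubspace_dualOp_of_sub_smul_eq hT hF hG hGF hφ hf hfx
  have hφTf : Tendsto (fun z => φ (T (f z))) (cobounded ℂ) (𝓝 0) :=
    ((φ.continuous.comp T.continuous).tendsto' 0 0 (by simp)).comp
      (tendsto_cobounded_of_sub_smul_eq hG.isBounded hfx)
  refine tendsto_nhds_unique tendsto_const_nhds (hφTf.congr' ?_)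
  filter_upwards [isBounded_def.mp hG.isBounded] with z hz
  rw [← hfx z hz, map_sub, map_smul, hφf z hz, smul_zero, sub_zero]

end Adjoint

/-- Under the density assumption on glocal spectral subspaces of `T`, the adjoint `T*`
has Dunford's property (C). -/
theorem adjoint_hasPropertyC {X : Type*} [NormedAddCommGroup X] [NormedSpace ℂ X]
    [CompleteSpace X] (T : X →L[ℂ] X)
    (hdense : ∀ U : Set ℂ, RelativelyOpenInSpectrum T U →
      Dense (glocalSubspace T (closure U))) :
    HasPropertyC (dualOp T) := by
  intro F hF
  by_cases hσF : spectrum ℂ T ⊆ F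
  · suffices localSubspace (dualOp T) F = univ from this ▸ isClosed_univ
    exact eq_univ_of_forall fun φ =>
      (localSpectrum_subset_spectrum _ φ).trans ((spectrum_dualOp_subset T).trans hσF)
  · obtain ⟨lam, hlam, hlamF⟩ := not_subset.mp hσF
    obtain ⟨G, hGF, hG, hGdense⟩ :=
      exists_isCompact_subset_dense_glocalSubspace hdense hlam (hF.isOpen_compl.mem_nhds hlamF)
    suffices localSubspace (dualOp T) F = {0} from this ▸ isClosed_singleton
    refine eq_singleton_iff_unique_mem.mpr ⟨?_, fun φ hφ => ?_⟩
    · show localSpectrum _ 0 ⊆ F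
      simp [localSpectrum_zero]
    · exact StrongDual.eq_zero_of_dense hGdense fun x hx =>
        apply_eq_zero_of_mem_localSubspace_of_mem_glocalSubspace (hasSVEP_dualOp hdense) hF hG
          (subset_compl_iff_disjoint_right.mp hGF) hφ hx
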